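/- arXiv:1708.08353 — 2 statements merged into one kernel-verified Lean document; each statement's English description precedes it below -/
import Mathlib

section
/- The function t ↦ log(1 − Φ(t)) is concave on ℝ, where Φ is the standard normal cumulative distribution function. -/
noncomputable def gaussPDF (t : ℝ) : ℝ := (Real.sqrt (2 * Real.pi))⁻¹ * Real.exp (-t ^ 2 / 2)

noncomputable def Phi (t : ℝ) : ℝ := ∫ u in Set.Iic t, gaussPDF u

/-!
Write `G = 1 - Φ = ∫_{(t,∞)} φ`. Since `G' = -φ` and `φ' = -t φ`, the second derivative
of `log G` is `(t φ G - φ²) / G²`, so concavity amounts to the Mills ratio bound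
`t G(t) ≤ φ(t)`. For `t ≤ 0` this is trivial, and for `t > 0` it follows from
`t ∫_{(t,∞)} φ ≤ ∫_{(t,∞)} u φ(u) du = φ(t)`.
-/

open Real MeasureTheory Set Filter ProbabilityTheory

theorem concaveOn_univ_log_of_mul_le_sq {G G' G'' : ℝ → ℝ}
    (hG : ∀ x, HasDerivAt G (G' x) x) (hG' : ∀ x, HasDerivAt G' (G'' x) x)
    (hpos : ∀ x, 0 < G x) (hle : ∀ x, G x * G'' x ≤ G' x ^ 2) :
    ConcaveOn ℝ univ fun x => log (G x) := by
  have hlog (x : ℝ) : HasDerivAt (fun x => log (G x)) (G' x / G x) x :=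
    (hG x).log (hpos x).ne'
  have hlog' (x : ℝ) :
      HasDerivAt (fun x => G' x / G x) ((G'' x * G x - G' x * G' x) / G x ^ 2) x :=
    (hG' x).div (hG x) (hpos x).ne'
  refine concaveOn_of_hasDerivWithinAt2_nonpos convex_univ
    (continuous_iff_continuousAt.2 fun x => (hlog x).continuousAt).continuousOn
    (fun x _ => (hlog x).hasDerivWithinAt) (fun x _ => (hlog' x).hasDerivWithinAt)
    fun x _ => div_nonpos_of_nonpos_of_nonneg ?_ (sq_nonneg _)
  nlinarith [hle x]

theorem hasDerivAt_integral_Iic {E : Type*} [NormedAddCommGroup E] [NormedSpace ℝ E]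
    [CompleteSpace E] {f : ℝ → E} (hf : Integrable f) (hcont : Continuous f) (t : ℝ) :
    HasDerivAt (fun t => ∫ u in Iic t, f u) (f t) t := by
  have hsplit : (fun t => ∫ u in Iic t, f u) =
      fun t => (∫ u in (0 : ℝ)..t, f u) + ∫ u in Iic 0, f u := by
    funext t
    rw [← intervalIntegral.integral_Iic_sub_Iic hf.integrableOn hf.integrableOn,
      sub_add_cancel]
  rw [hsplit]
  exact (intervalIntegral.integral_hasDerivAt_right hf.intervalIntegrable
    hcont.stronglyMeasurable.stronglyMeasurableAtFilter hcont.continuousAt).add_const _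

theorem gaussPDF_eq_gaussianPDFReal : gaussPDF = gaussianPDFReal 0 1 := by
  funext t
  simp [gaussPDF, gaussianPDFReal]

theorem gaussPDF_pos (t : ℝ) : 0 < gaussPDF t := by
  rw [gaussPDF_eq_gaussianPDFReal]
  exact gaussianPDFReal_pos 0 1 t one_ne_zero

theorem continuous_gaussPDF : Continuous gaussPDF := by
  unfold gaussPDF
  fun_prop

theorem integrable_gaussPDF : Integrable gaussPDF := by
  rw [gaussPDF_eq_gaussianPDFReal]
  exact integrable_gaussianPDFReal 0 1

theorem hasDerivAt_gaussPDF (t : ℝ) : HasDerivAt gaussPDF (-t * gaussPDF t) t := by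
  have hexp : HasDerivAt (fun t : ℝ => -t ^ 2 / 2) (-t) t :=
    ((hasDerivAt_pow 2 t).neg.div_const 2).congr_deriv (by ring)
  unfold gaussPDF
  exact (hexp.exp.const_mul _).congr_deriv (by ring)

theorem tendsto_gaussPDF_atTop : Tendsto gaussPDF atTop (nhds 0) := by
  have hexp : Tendsto (fun t : ℝ => -t ^ 2 / 2) atTop atBot :=
    (tendsto_neg_atBot_iff.2 (tendsto_pow_atTop two_ne_zero)).atBot_div_const two_pos
  unfold gaussPDF
  simpa using (tendsto_exp_atBot.comp hexp).const_mul (Real.sqrt (2 * π))⁻¹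

theorem hasDerivAt_Phi (t : ℝ) : HasDerivAt Phi (gaussPDF t) t :=
  hasDerivAt_integral_Iic integrable_gaussPDF continuous_gaussPDF t

theorem one_sub_Phi_eq_integral_Ioi (t : ℝ) : 1 - Phi t = ∫ u in Ioi t, gaussPDF u := by
  have htotal : ∫ u, gaussPDF u = 1 := by
    rw [gaussPDF_eq_gaussianPDFReal]
    exact integral_gaussianPDFReal_eq_one 0 one_ne_zero
  rw [← htotal, ← intervalIntegral.integral_Iic_add_Ioi integrable_gaussPDF.integrableOn
    integrable_gaussPDF.integrableOn, Phi, add_sub_cancel_left]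

theorem one_sub_Phi_pos (t : ℝ) : 0 < 1 - Phi t := by
  rw [one_sub_Phi_eq_integral_Ioi, setIntegral_pos_iff_support_of_nonneg_ae
    (ae_of_all _ fun u => (gaussPDF_pos u).le) integrable_gaussPDF.integrableOn,
    Function.support_eq_univ fun u => (gaussPDF_pos u).ne', univ_inter]
  simp

theorem integrable_mul_gaussPDF : Integrable fun u => u * gaussPDF u := by
  refine ((integrable_mul_exp_neg_mul_sq (b := 1 / 2) one_half_pos).const_mul
    (Real.sqrt (2 * π))⁻¹).congr (ae_of_all _ fun u => ?_)
  simp only [gaussPDF]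
  ring_nf

theorem integral_Ioi_mul_gaussPDF (t : ℝ) : ∫ u in Ioi t, u * gaussPDF u = gaussPDF t := by
  rw [integral_Ioi_of_hasDerivAt_of_tendsto continuous_gaussPDF.neg.continuousWithinAt
    (fun u _ => (hasDerivAt_gaussPDF u).neg.congr_deriv (by ring))
    integrable_mul_gaussPDF.integrableOn tendsto_gaussPDF_atTop.neg]
  simp

theorem mul_one_sub_Phi_le_gaussPDF (t : ℝ) : t * (1 - Phi t) ≤ gaussPDF t := by
  rcases le_or_gt t 0 with ht | ht
  · exact (mul_nonpos_of_nonpos_of_nonneg ht (one_sub_Phi_pos t).le).trans (gaussPDF_pos t).le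
  · calc t * (1 - Phi t) = ∫ u in Ioi t, t * gaussPDF u := by
          rw [one_sub_Phi_eq_integral_Ioi, integral_const_mul]
      _ ≤ ∫ u in Ioi t, u * gaussPDF u :=
          setIntegral_mono_on (integrable_gaussPDF.const_mul t).integrableOn
            integrable_mul_gaussPDF.integrableOn measurableSet_Ioi
            fun u hu => mul_le_mul_of_nonneg_right (le_of_lt hu) (gaussPDF_pos u).le
      _ = gaussPDF t := integral_Ioi_mul_gaussPDF t

theorem stmt2 : ConcaveOn ℝ Set.univ (fun t : ℝ => Real.log (1 - Phi t)) := by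
  refine concaveOn_univ_log_of_mul_le_sq (fun t => (hasDerivAt_Phi t).const_sub 1)
    (fun t => (hasDerivAt_gaussPDF t).neg) one_sub_Phi_pos fun t => ?_
  nlinarith [mul_le_mul_of_nonneg_right (mul_one_sub_Phi_le_gaussPDF t) (gaussPDF_pos t).le]
end

section
/- Let β̂, β₀ ∈ ℝ^p with ‖β₀‖₀ ≤ s, and let β̂^ν be the componentwise hard-thresholded vector β̂^ν_j = β̂_j·1{|β̂_j| ≥ ν_j} with positive thresholds ν_j. Then ‖β̂^ν‖₀ ≤ s + ‖β̂ − β₀‖₁/ν_min, where ν_min = min_j ν_j. -/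
/-!
Every coordinate kept by the thresholding either lies in the support of `β₀` (at most `s` of
them) or is a false discovery: `β₀ j = 0` and `|β̂_j| ≥ ν_j ≥ ν_min`. Each false discovery
therefore contributes at least `ν_min` to `‖β̂ - β₀‖₁`, so there are at most
`‖β̂ - β₀‖₁ / ν_min` of them.
-/

open Finset

/-- The hard-thresholding estimator `β̂^ν`. -/
noncomputable def hardThreshold {ι : Type*} (ν b : ι → ℝ) (j : ι) : ℝ :=
  if ν j ≤ |b j| then b j else 0

lemma le_abs_of_hardThreshold_ne_zero {ι : Type*} {ν b : ι → ℝ} {j : ι}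
    (h : hardThreshold ν b j ≠ 0) : ν j ≤ |b j| := by
  by_contra hlt
  exact h (if_neg hlt)

section

variable {ι : Type*} [Fintype ι]

lemma card_filter_ne_zero_le_add [DecidableEq ι] {M : Type*} [Zero M] [DecidableEq M]
    (x y : ι → M) : #{j | x j ≠ 0} ≤ #{j | y j ≠ 0} + #{j | x j ≠ 0 ∧ y j = 0} := by
  calc #{j | x j ≠ 0}
      ≤ #(({j | y j ≠ 0} : Finset ι) ∪ ({j | x j ≠ 0 ∧ y j = 0} : Finset ι)) :=
        card_le_card fun j ↦ by
          simp only [mem_filter, mem_union, mem_univ, true_and]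
          tauto
    _ ≤ _ := card_union_le _ _

lemma card_kept_outside_support_mul_le_l1_dist {ν b β₀ : ι → ℝ} {c : ℝ} (hc : ∀ j, c ≤ ν j) :
    #{j | hardThreshold ν b j ≠ 0 ∧ β₀ j = 0} * c ≤ ∑ j, |b j - β₀ j| := by
  set T : Finset ι := {j | hardThreshold ν b j ≠ 0 ∧ β₀ j = 0}
  calc #T * c = #T • c := (nsmul_eq_mul _ _).symm
    _ ≤ ∑ j ∈ T, |b j - β₀ j| := card_nsmul_le_sum _ _ _ fun j hj ↦ by
        obtain ⟨hkept, hnull⟩ := (mem_filter.mp hj).2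
        rw [hnull, sub_zero]
        exact (hc j).trans (le_abs_of_hardThreshold_ne_zero hkept)
    _ ≤ ∑ j, |b j - β₀ j| := sum_le_sum_of_subset_of_nonneg (subset_univ T) fun _ _ _ ↦ abs_nonneg _

lemma card_support_hardThreshold_le [DecidableEq ι] {ν b β₀ : ι → ℝ} {c : ℝ} (hc₀ : 0 < c)
    (hc : ∀ j, c ≤ ν j) :
    (#{j | hardThreshold ν b j ≠ 0} : ℝ) ≤ #{j | β₀ j ≠ 0} + (∑ j, |b j - β₀ j|) / c := by
  have hsplit := card_filter_ne_zero_le_add (hardThreshold ν b) β₀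
  have hfalse := card_kept_outside_support_mul_le_l1_dist (b := b) (β₀ := β₀) hc
  rw [← le_div_iff₀ hc₀] at hfalse
  calc (#{j | hardThreshold ν b j ≠ 0} : ℝ)
      ≤ #{j | β₀ j ≠ 0} + #{j | hardThreshold ν b j ≠ 0 ∧ β₀ j = 0} := by exact_mod_cast hsplit
    _ ≤ _ := by gcongr

end

theorem stmt4 (p s : ℕ) (βh β₀ ν : Fin p → ℝ)
    (hν : ∀ j, 0 < ν j)
    (h0 : (Finset.univ.filter fun j => β₀ j ≠ 0).card ≤ s)
    (νmin : ℝ) (hνmin : IsLeast (Set.range ν) νmin)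
    (βν : Fin p → ℝ) (hβν : ∀ j, βν j = if ν j ≤ |βh j| then βh j else 0) :
    ((Finset.univ.filter fun j => βν j ≠ 0).card : ℝ) ≤ s + (∑ j, |βh j - β₀ j|) / νmin := by
  obtain ⟨j₀, rfl⟩ := hνmin.1
  obtain rfl : βν = hardThreshold ν βh := funext hβν
  have hs : (#{j | β₀ j ≠ 0} : ℝ) ≤ s := by exact_mod_cast h0
  linarith [card_support_hardThreshold_le (b := βh) (β₀ := β₀) (hν j₀)
    fun j ↦ hνmin.2 ⟨j, rfl⟩]
end
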